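/- arXiv:1402.2851 — 12 statements merged into one kernel-verified Lean document; each statement's English description precedes it below -/
import Mathlib

section
/- Let A be a unital algebra with an involutive anti-automorphism • and invertible elements a, b, c, x with a·b⁻¹ = (b•)⁻¹·a• and b⁻¹·c = c•·(b•)⁻¹ and x·b• = 1 + a·c•. Then a⁻¹·x = x•·(a•)⁻¹ and x·c⁻¹ = (c•)⁻¹·x•. -/
/-!
Read with `•` as a star operation, each relation `u·v⁻¹ = (v•)⁻¹·u•` says that `v•·u` is
self-adjoint, and each relation `v⁻¹·u = u•·(v•)⁻¹` says that `u·v•` is. So the hypotheses say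
that `b•·a` and `c·b•` are self-adjoint, and the claim is that `x·a•` and `c•·x` are. Since `b` is
invertible, it suffices to check this after conjugating by `b`, and there `x·b• = 1 + a·c•` gives
`b•·(x·a•)·b = b•·a + a•·(c·b•)·a` and `b·(c•·x)·b• = c·b• + c·(b•·a)·c•`.
-/

universe u

variable {R : Type u}

section Monoid

variable [Monoid R] [StarMul R]

theorem Units.mul_inv_eq_star_inv_mul_star_iff {u : R} {v : Rˣ} :
    u * ↑v⁻¹ = ↑(star v)⁻¹ * star u ↔ IsSelfAdjoint (star (v : R) * u) := by
  rw [Units.mul_inv_eq_iff_eq_mul, mul_assoc, Units.eq_inv_mul_iff_mul_eq, Units.coe_star,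
    isSelfAdjoint_iff, star_mul, star_star, eq_comm]

theorem Units.inv_mul_eq_star_mul_star_inv_iff {u : R} {v : Rˣ} :
    ↑v⁻¹ * u = star u * ↑(star v)⁻¹ ↔ IsSelfAdjoint (u * star (v : R)) := by
  rw [Units.inv_mul_eq_iff_eq_mul, ← mul_assoc, Units.eq_mul_inv_iff_mul_eq, Units.coe_star,
    isSelfAdjoint_iff, star_mul, star_star, eq_comm]

end Monoid

section Ring

variable [Ring R] [StarRing R] {a b c x : R}

theorem isSelfAdjoint_mul_star_of_mul_star_eq_one_add (hb : IsUnit b)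
    (hba : IsSelfAdjoint (star b * a)) (hcb : IsSelfAdjoint (c * star b))
    (hx : x * star b = 1 + a * star c) : IsSelfAdjoint (x * star a) := by
  have hab : star a * b = star b * a := by simpa using hba.star_eq
  have hbc : b * star c = c * star b := by simpa using hcb.star_eq
  rw [← hb.isSelfAdjoint_conjugate_iff']
  have key : star b * (x * star a) * b = star b * a + star a * (c * star b) * a := calc
    star b * (x * star a) * b = star b * (x * star b) * a := by
      simp only [mul_assoc, hab]
    _ = star b * a + star a * b * star c * a := by
      rw [hx, hab]; noncomm_ring
    _ = star b * a + star a * (c * star b) * a := by rw [mul_assoc (star a), hbc]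
  rw [key]
  exact hba.add (hcb.conjugate' a)

theorem isSelfAdjoint_star_mul_of_mul_star_eq_one_add (hb : IsUnit b)
    (hba : IsSelfAdjoint (star b * a)) (hcb : IsSelfAdjoint (c * star b))
    (hx : x * star b = 1 + a * star c) : IsSelfAdjoint (star c * x) := by
  have hbc : b * star c = c * star b := by simpa using hcb.star_eq
  rw [← hb.isSelfAdjoint_conjugate_iff]
  have key : b * (star c * x) * star b = c * star b + c * (star b * a) * star c := calc
    b * (star c * x) * star b = b * star c * (x * star b) := by simp only [mul_assoc]
    _ = c * star b + c * (star b * a) * star c := by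
      rw [hx, hbc]; noncomm_ring
  rw [key]
  exact hcb.add (hba.conjugate c)

end Ring

theorem stmt1_general {A : Type*} [Ring A] (σ : A → A)
    (hσmul : ∀ u v : A, σ (u * v) = σ v * σ u)
    (hσadd : ∀ u v : A, σ (u + v) = σ u + σ v)
    (hσinv : ∀ u : A, σ (σ u) = u)
    (a b c x ab bb cb xb : Aˣ)
    (hab : σ ↑a = ↑ab) (hbb : σ ↑b = ↑bb) (hcb : σ ↑c = ↑cb) (hxb : σ ↑x = ↑xb)
    (h1 : (a : A) * ↑b⁻¹ = ↑bb⁻¹ * ↑ab)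
    (h2 : (↑b⁻¹ : A) * ↑c = ↑cb * ↑bb⁻¹)
    (h3 : (x : A) * ↑bb = 1 + ↑a * ↑cb) :
    (↑a⁻¹ : A) * ↑x = ↑xb * ↑ab⁻¹ ∧ (x : A) * ↑c⁻¹ = ↑cb⁻¹ * ↑xb := by
  let _ : StarRing A :=
    { star := σ, star_involutive := hσinv, star_mul := hσmul, star_add := hσadd }
  obtain rfl : ab = star a := Units.ext hab.symm
  obtain rfl : bb = star b := Units.ext hbb.symm
  obtain rfl : cb = star c := Units.ext hcb.symm
  obtain rfl : xb = star x := Units.ext hxb.symm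
  simp only [Units.coe_star] at h1 h2 h3 ⊢
  rw [Units.mul_inv_eq_star_inv_mul_star_iff] at h1
  rw [Units.inv_mul_eq_star_mul_star_inv_iff] at h2
  rw [Units.inv_mul_eq_star_mul_star_inv_iff, Units.mul_inv_eq_star_inv_mul_star_iff]
  exact ⟨isSelfAdjoint_mul_star_of_mul_star_eq_one_add b.isUnit h1 h2 h3,
    isSelfAdjoint_star_mul_of_mul_star_eq_one_add b.isUnit h1 h2 h3⟩

/-- In a unital ring with an involutive anti-automorphism `σ`
and invertible elements `a, b, c, x` (with invertible bullet images),
the relations `a·b⁻¹ = (b•)⁻¹·a•`, `b⁻¹·c = c•·(b•)⁻¹`, `x·b• = 1 + a·c•`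
imply `a⁻¹·x = x•·(a•)⁻¹` and `x·c⁻¹ = (c•)⁻¹·x•`. -/
theorem stmt1 {A : Type*} [Ring A] (σ : A → A)
    (hσmul : ∀ u v : A, σ (u * v) = σ v * σ u)
    (hσadd : ∀ u v : A, σ (u + v) = σ u + σ v)
    (hσinv : ∀ u : A, σ (σ u) = u)
    (hσone : σ 1 = 1)
    (a b c x ab bb cb xb : Aˣ)
    (hab : σ ↑a = ↑ab) (hbb : σ ↑b = ↑bb) (hcb : σ ↑c = ↑cb) (hxb : σ ↑x = ↑xb)
    (h1 : (a : A) * ↑b⁻¹ = ↑bb⁻¹ * ↑ab)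
    (h2 : (↑b⁻¹ : A) * ↑c = ↑cb * ↑bb⁻¹)
    (h3 : (x : A) * ↑bb = 1 + ↑a * ↑cb) :
    (↑a⁻¹ : A) * ↑x = ↑xb * ↑ab⁻¹ ∧ (x : A) * ↑c⁻¹ = ↑cb⁻¹ * ↑xb :=
  stmt1_general σ hσmul hσadd hσinv a b c x ab bb cb xb hab hbb hcb hxb h1 h2 h3
end

section
/- Let A be a unital algebra with an involutive anti-automorphism •, and invertible a, b, c, x satisfying a·b⁻¹ = (b•)⁻¹·a• and b⁻¹·c = c•·(b•)⁻¹. Then the system { x = (b•)⁻¹ + a·b⁻¹·c and b = (x•)⁻¹ + c·x⁻¹·a } holds if and only if the single equation x·b• = 1 + a·c• holds. -/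
/-!
Write `u*` for the involution. The hypotheses say that `a b⁻¹` and `b⁻¹ c` are self-adjoint.
For units `p q r s` with `q⁻¹ r` self-adjoint, `q⁻¹ r = r* q*⁻¹` turns `s = q*⁻¹ + p q⁻¹ r` into
`s = (1 + p r*) q*⁻¹`, i.e. `s q* = 1 + p r*`. This shows at once that the first equation of the
system is equivalent to `x b* = 1 + a c*`. Applying the involution to the latter gives
`b x* = 1 + c a*`, which is the second equation in the same shape, provided `x⁻¹ a` is
self-adjoint; and indeed `x a* = a b⁻¹ (1 + c a*) = a b⁻¹ b x* = a x*`.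
-/

namespace Units

variable {A : Type*} [Monoid A] [StarMul A]

lemma isSelfAdjoint_coe_mul_inv_iff (a b : Aˣ) :
    IsSelfAdjoint ((a : A) * ↑b⁻¹) ↔ (a : A) * ↑b⁻¹ = ↑(star b)⁻¹ * ↑(star a) := by
  rw [IsSelfAdjoint, star_mul, coe_star_inv, coe_star, eq_comm]

lemma isSelfAdjoint_coe_inv_mul_iff (b c : Aˣ) :
    IsSelfAdjoint ((↑b⁻¹ : A) * c) ↔ (↑b⁻¹ : A) * c = ↑(star c) * ↑(star b)⁻¹ := by
  rw [IsSelfAdjoint, star_mul, coe_star_inv, coe_star, eq_comm]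

end Units

section StarSemiring

variable {A : Type*} [Semiring A] [StarRing A]

lemma eq_star_inv_add_iff_mul_star_eq {p q r s : Aˣ} (h : IsSelfAdjoint ((↑q⁻¹ : A) * r)) :
    (s : A) = ↑(star q)⁻¹ + p * ↑q⁻¹ * r ↔ (s : A) * ↑(star q) = 1 + p * ↑(star r) := by
  rw [← Units.eq_mul_inv_iff_mul_eq, add_mul, one_mul, mul_assoc (p : A),
    (Units.isSelfAdjoint_coe_inv_mul_iff q r).1 h, mul_assoc]

lemma mul_star_eq_one_add_mul_star_comm {x b a c : Aˣ}
    (h : (x : A) * ↑(star b) = 1 + a * ↑(star c)) :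
    (b : A) * ↑(star x) = 1 + c * ↑(star a) := by
  simpa only [star_mul, star_add, star_one, Units.coe_star, star_star] using congrArg star h

lemma isSelfAdjoint_inv_mul_of_mul_star_eq {a b c x : Aˣ} (h₁ : IsSelfAdjoint ((a : A) * ↑b⁻¹))
    (h₂ : IsSelfAdjoint ((↑b⁻¹ : A) * c)) (hx : (x : A) * ↑(star b) = 1 + a * ↑(star c)) :
    IsSelfAdjoint ((↑x⁻¹ : A) * a) := by
  have hx' : (x : A) = ↑(star b)⁻¹ + a * ↑b⁻¹ * c := (eq_star_inv_add_iff_mul_star_eq h₂).2 hx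
  have hb : (b : A) * ↑(star x) = 1 + c * ↑(star a) := mul_star_eq_one_add_mul_star_comm hx
  have key : (x : A) * ↑(star a) = a * ↑(star x) := by
    calc (x : A) * ↑(star a) = ↑a * ↑b⁻¹ * (1 + c * ↑(star a)) := by
          rw [hx', add_mul, mul_assoc, ← (Units.isSelfAdjoint_coe_mul_inv_iff a b).1 h₁]
          simp only [mul_add, mul_one, mul_assoc]
      _ = ↑a * ↑(star x) := by rw [← hb, mul_assoc, Units.inv_mul_cancel_left]
  rw [Units.isSelfAdjoint_coe_inv_mul_iff, Units.eq_mul_inv_iff_mul_eq, mul_assoc,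
    Units.inv_mul_eq_iff_eq_mul, key]

end StarSemiring

theorem stmt2_general {A : Type*} [Ring A] (σ : A → A)
    (hσmul : ∀ u v : A, σ (u * v) = σ v * σ u)
    (hσadd : ∀ u v : A, σ (u + v) = σ u + σ v)
    (hσinv : ∀ u : A, σ (σ u) = u)
    (a b c x ab bb cb xb : Aˣ)
    (hab : σ ↑a = ↑ab) (hbb : σ ↑b = ↑bb) (hcb : σ ↑c = ↑cb) (hxb : σ ↑x = ↑xb)
    (h1 : (a : A) * ↑b⁻¹ = ↑bb⁻¹ * ↑ab)
    (h2 : (↑b⁻¹ : A) * ↑c = ↑cb * ↑bb⁻¹) :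
    ((x : A) = ↑bb⁻¹ + ↑a * ↑b⁻¹ * ↑c ∧ (b : A) = ↑xb⁻¹ + ↑c * ↑x⁻¹ * ↑a)
      ↔ (x : A) * ↑bb = 1 + ↑a * ↑cb := by
  let : StarRing A :=
    { star := σ, star_involutive := hσinv, star_mul := hσmul, star_add := hσadd }
  obtain rfl : ab = star a := Units.ext hab.symm
  obtain rfl : bb = star b := Units.ext hbb.symm
  obtain rfl : cb = star c := Units.ext hcb.symm
  obtain rfl : xb = star x := Units.ext hxb.symm
  rw [← Units.isSelfAdjoint_coe_mul_inv_iff] at h1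
  rw [← Units.isSelfAdjoint_coe_inv_mul_iff] at h2
  rw [eq_star_inv_add_iff_mul_star_eq h2]
  refine ⟨And.left, fun hx => ⟨hx, ?_⟩⟩
  exact (eq_star_inv_add_iff_mul_star_eq (isSelfAdjoint_inv_mul_of_mul_star_eq h1 h2 hx)).2
    (mul_star_eq_one_add_mul_star_comm hx)

/-- In a unital ring with an involutive anti-automorphism `σ`
and invertible `a, b, c, x` with `a·b⁻¹ = (b•)⁻¹·a•` and `b⁻¹·c = c•·(b•)⁻¹`,
the system `x = (b•)⁻¹ + a·b⁻¹·c` and `b = (x•)⁻¹ + c·x⁻¹·a` holds if and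
only if the single equation `x·b• = 1 + a·c•` holds. -/
theorem stmt2 {A : Type*} [Ring A] (σ : A → A)
    (hσmul : ∀ u v : A, σ (u * v) = σ v * σ u)
    (hσadd : ∀ u v : A, σ (u + v) = σ u + σ v)
    (hσinv : ∀ u : A, σ (σ u) = u)
    (hσone : σ 1 = 1)
    (a b c x ab bb cb xb : Aˣ)
    (hab : σ ↑a = ↑ab) (hbb : σ ↑b = ↑bb) (hcb : σ ↑c = ↑cb) (hxb : σ ↑x = ↑xb)
    (h1 : (a : A) * ↑b⁻¹ = ↑bb⁻¹ * ↑ab)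
    (h2 : (↑b⁻¹ : A) * ↑c = ↑cb * ↑bb⁻¹) :
    ((x : A) = ↑bb⁻¹ + ↑a * ↑b⁻¹ * ↑c ∧ (b : A) = ↑xb⁻¹ + ↑c * ↑x⁻¹ * ↑a)
      ↔ (x : A) * ↑bb = 1 + ↑a * ↑cb :=
  stmt2_general σ hσmul hσadd hσinv a b c x ab bb cb xb hab hbb hcb hxb h1 h2
end

section
/- Let A be a unital algebra with an involutive anti-automorphism •, and define for invertible a, b, c ∈ A (with images a•, b•, c• under •) the 2×2 matrices V(a,b) = [[a·b⁻¹, (b•)⁻¹],[0,1]] and U(b,c) = [[1,0],[c⁻¹, b•·(c•)⁻¹]] over A. If a·b⁻¹ = (b•)⁻¹·a• and b⁻¹·c = c•·(b•)⁻¹ and x = (b•)⁻¹ + a·b⁻¹·c and b = (x•)⁻¹ + c·x⁻¹·a, then V(a,b)·U(b,c) = U(a,x)·V(x,c). -/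
/-- `V(a,b)` matrix; `bb` denotes the bullet image of `b`. -/
def Vmat {A : Type*} [Ring A] (a b bb : Aˣ) : Matrix (Fin 2) (Fin 2) A :=
  !![(a : A) * ↑b⁻¹, ↑bb⁻¹; 0, 1]

/-- `U(b,c)` matrix; `bb`, `cb` denote the bullet images of `b`, `c`. -/
def Umat {A : Type*} [Ring A] (b c bb cb : Aˣ) : Matrix (Fin 2) (Fin 2) A :=
  !![1, 0; ↑c⁻¹, (bb : A) * ↑cb⁻¹]

/-!
Both products have the same off-diagonal entries `(c•)⁻¹` and `c⁻¹`. The top-left entries agree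
by the defining formula of `x` multiplied by `c⁻¹` on the right; the bottom-right entries agree
by the image under `•` of the formula for `b`, multiplied by `(c•)⁻¹` on the right.
-/

theorem Units.map_inv_of_antiMul {M : Type*} [Monoid M] (σ : M → M)
    (hσmul : ∀ u v : M, σ (u * v) = σ v * σ u) (hσone : σ 1 = 1) {u ub : Mˣ} (h : σ u = ub) :
    σ ↑u⁻¹ = ↑ub⁻¹ :=
  Units.eq_inv_of_mul_eq_one_right <| by rw [← h, ← hσmul, Units.mul_inv, hσone]

theorem Vmat_mul_Umat {A : Type*} [Ring A] (a b c bb cb : Aˣ) :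
    Vmat a b bb * Umat b c bb cb =
      !![(a : A) * ↑b⁻¹ + ↑bb⁻¹ * ↑c⁻¹, ↑cb⁻¹; ↑c⁻¹, (bb : A) * ↑cb⁻¹] := by
  simp [Vmat, Umat, ← mul_assoc]

theorem Umat_mul_Vmat {A : Type*} [Ring A] (a x c ab xb cb : Aˣ) :
    Umat a x ab xb * Vmat x c cb =
      !![(x : A) * ↑c⁻¹, ↑cb⁻¹; ↑c⁻¹, ↑x⁻¹ * ↑cb⁻¹ + (ab : A) * ↑xb⁻¹] := by
  simp [Vmat, Umat, ← mul_assoc]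

theorem stmt3_general {A : Type*} [Ring A] (σ : A → A)
    (hσmul : ∀ u v : A, σ (u * v) = σ v * σ u)
    (hσadd : ∀ u v : A, σ (u + v) = σ u + σ v)
    (hσinv : ∀ u : A, σ (σ u) = u)
    (hσone : σ 1 = 1)
    (a b c x ab bb cb xb : Aˣ)
    (hab : σ ↑a = ↑ab) (hbb : σ ↑b = ↑bb) (hcb : σ ↑c = ↑cb) (hxb : σ ↑x = ↑xb)
    (hx : (x : A) = ↑bb⁻¹ + ↑a * ↑b⁻¹ * ↑c)
    (hb : (b : A) = ↑xb⁻¹ + ↑c * ↑x⁻¹ * ↑a) :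
    Vmat a b bb * Umat b c bb cb = Umat a x ab xb * Vmat x c cb := by
  have top_left : (a : A) * ↑b⁻¹ + ↑bb⁻¹ * ↑c⁻¹ = ↑x * ↑c⁻¹ := by
    rw [hx, add_mul, Units.mul_inv_cancel_right, add_comm]
  have hb_bullet : (bb : A) = ↑x⁻¹ + ↑ab * ↑xb⁻¹ * ↑cb := by
    have hσxb : σ ↑xb = ↑x := by rw [← hxb, hσinv]
    rw [← hbb, hb, hσadd, hσmul, hσmul, hab, hcb, Units.map_inv_of_antiMul σ hσmul hσone hxb,
      Units.map_inv_of_antiMul σ hσmul hσone hσxb, mul_assoc]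
  have bottom_right : (bb : A) * ↑cb⁻¹ = ↑x⁻¹ * ↑cb⁻¹ + ↑ab * ↑xb⁻¹ := by
    rw [hb_bullet, add_mul, Units.mul_inv_cancel_right]
  rw [Vmat_mul_Umat, Umat_mul_Vmat, top_left, bottom_right]

/-- If `a·b⁻¹ = (b•)⁻¹·a•`, `b⁻¹·c = c•·(b•)⁻¹`,
`x = (b•)⁻¹ + a·b⁻¹·c` and `b = (x•)⁻¹ + c·x⁻¹·a`, then
`V(a,b)·U(b,c) = U(a,x)·V(x,c)`. -/
theorem stmt3 {A : Type*} [Ring A] (σ : A → A)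
    (hσmul : ∀ u v : A, σ (u * v) = σ v * σ u)
    (hσadd : ∀ u v : A, σ (u + v) = σ u + σ v)
    (hσinv : ∀ u : A, σ (σ u) = u)
    (hσone : σ 1 = 1)
    (a b c x ab bb cb xb : Aˣ)
    (hab : σ ↑a = ↑ab) (hbb : σ ↑b = ↑bb) (hcb : σ ↑c = ↑cb) (hxb : σ ↑x = ↑xb)
    (h1 : (a : A) * ↑b⁻¹ = ↑bb⁻¹ * ↑ab)
    (h2 : (↑b⁻¹ : A) * ↑c = ↑cb * ↑bb⁻¹)
    (hx : (x : A) = ↑bb⁻¹ + ↑a * ↑b⁻¹ * ↑c)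
    (hb : (b : A) = ↑xb⁻¹ + ↑c * ↑x⁻¹ * ↑a) :
    Vmat a b bb * Umat b c bb cb = Umat a x ab xb * Vmat x c cb :=
  stmt3_general σ hσmul hσadd hσinv hσone a b c x ab bb cb xb hab hbb hcb hxb hx hb
end

section
/- Let A be a unital algebra with an involutive anti-automorphism •, and let T : ℤ × ℤ → A (defined on pairs (j,k) with j+k even) take invertible values and satisfy: T(j,k+1)·T(j,k-1)• = 1 + T(j-1,k)·T(j+1,k)• for all j+k odd, together with T(j,k-1)⁻¹·T(j+1,k) = T(j+1,k)•·(T(j,k-1)•)⁻¹ and T(j-1,k)·T(j,k-1)⁻¹ = (T(j,k-1)•)⁻¹·T(j-1,k)• for all j+k odd. Then the quantity Γ(j,k) = T(j-1,k+1)·T(j,k)⁻¹ + (T(j,k)•)⁻¹·T(j+1,k-1)• satisfies Γ(j,k) = Γ(j-1,k-1), i.e. Γ is conserved in the (1,1) direction. -/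
/-!
Write `Γ(j,k) = P Q⁻¹ + R⁻¹ S` and `Γ(j-1,k-1) = U V⁻¹ + W⁻¹ X` with `P = T(j-1,k+1)`,
`Q = T(j,k)`, `R = T(j,k)•`, `S = T(j+1,k-1)•`, `U = T(j-2,k)`, `V = T(j-1,k-1)`,
`W = T(j-1,k-1)•`, `X = T(j,k-2)•`. The T-system at `(j-1,k)` and `(j,k-1)` reads
`P W = 1 + U R` and `Q X = 1 + V S`, and the first quasi-commutation relation at `(j-1,k)`,
`V⁻¹ Q = R W⁻¹`, says `Q W = V R`.
Dividing the first relation by `Q W = V R` on the right and the second by it on the left gives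
`P Q⁻¹ = (V R)⁻¹ + U V⁻¹` and `W⁻¹ X = (V R)⁻¹ + R⁻¹ S`, so both sides of the claim equal
`(V R)⁻¹ + U V⁻¹ + R⁻¹ S`.
-/

theorem mul_eq_mul_of_inv_mul_eq_mul_inv {G : Type*} [Group G] {a b c d : G}
    (h : c⁻¹ * a = b * d⁻¹) : a * d = c * b := by
  rw [inv_mul_eq_iff_eq_mul] at h
  rw [h]
  group

namespace Units

variable {A : Type*} [Ring A]

theorem val_mul_inv_eq_of_mul_eq_one_add {P Q R U V W : Aˣ} (hPW : (P * W : A) = 1 + U * R)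
    (hQW : Q * W = V * R) : (P * ↑Q⁻¹ : A) = ↑(V * R)⁻¹ + U * ↑V⁻¹ := by
  calc (P * ↑Q⁻¹ : A) = P * W * ↑(Q * W)⁻¹ := by simp [mul_assoc]
    _ = (1 + U * R) * ↑(R⁻¹ * V⁻¹) := by rw [hPW, hQW, mul_inv_rev]
    _ = ↑(V * R)⁻¹ + U * ↑V⁻¹ := by simp [add_mul, mul_assoc]

theorem inv_mul_val_eq_of_mul_eq_one_add {Q R S V W X : Aˣ} (hQX : (Q * X : A) = 1 + V * S)
    (hQW : Q * W = V * R) : (↑W⁻¹ * X : A) = ↑(V * R)⁻¹ + ↑R⁻¹ * S := by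
  calc (↑W⁻¹ * X : A) = ↑(Q * W)⁻¹ * (Q * X) := by simp [mul_assoc]
    _ = ↑(R⁻¹ * V⁻¹) * (1 + V * S) := by rw [hQX, hQW, mul_inv_rev]
    _ = ↑(V * R)⁻¹ + ↑R⁻¹ * S := by simp [mul_add, mul_assoc]

theorem mul_inv_add_inv_mul_eq {P Q R S U V W X : Aˣ} (hPW : (P * W : A) = 1 + U * R)
    (hQX : (Q * X : A) = 1 + V * S) (hQW : Q * W = V * R) :
    (P * ↑Q⁻¹ + ↑R⁻¹ * S : A) = U * ↑V⁻¹ + ↑W⁻¹ * X := by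
  rw [val_mul_inv_eq_of_mul_eq_one_add hPW hQW, inv_mul_val_eq_of_mul_eq_one_add hQX hQW]
  abel

end Units

theorem stmt4_general {A : Type*} [Ring A]
    (T Tb : ℤ → ℤ → Aˣ)
    (hT : ∀ j k : ℤ, Odd (j + k) →
      (T j (k+1) : A) * ↑(Tb j (k-1)) = 1 + (T (j-1) k : A) * ↑(Tb (j+1) k))
    (hq1 : ∀ j k : ℤ, Odd (j + k) →
      (↑(T j (k-1))⁻¹ : A) * ↑(T (j+1) k) = (Tb (j+1) k : A) * ↑(Tb j (k-1))⁻¹)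
    (j k : ℤ) (hjk : Even (j + k)) :
    (T (j-1) (k+1) : A) * ↑(T j k)⁻¹ + (↑(Tb j k)⁻¹ : A) * ↑(Tb (j+1) (k-1))
      = (T (j-2) k : A) * ↑(T (j-1) (k-1))⁻¹
        + (↑(Tb (j-1) (k-1))⁻¹ : A) * ↑(Tb j (k-2)) := by
  have hodd₁ : Odd (j - 1 + k) := by rw [sub_add_eq_add_sub]; exact hjk.sub_odd odd_one
  have hodd₂ : Odd (j + (k - 1)) := by rw [← add_sub_assoc]; exact hjk.sub_odd odd_one
  have hPW := hT (j - 1) k hodd₁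
  have hQX := hT j (k - 1) hodd₂
  have hQW := hq1 (j - 1) k hodd₁
  rw [sub_sub, one_add_one_eq_two, sub_add_cancel] at hPW
  rw [sub_add_cancel, sub_sub, one_add_one_eq_two] at hQX
  rw [sub_add_cancel] at hQW
  refine Units.mul_inv_add_inv_mul_eq hPW hQX (mul_eq_mul_of_inv_mul_eq_mul_inv ?_)
  exact Units.ext (by simpa using hQW)

/-- For a solution `T` of the noncommutative A₁ T-system (with
bullet images `Tb` under an involutive anti-automorphism `σ`), the quantity
`Γ(j,k) = T(j-1,k+1)·T(j,k)⁻¹ + (T(j,k)•)⁻¹·T(j+1,k-1)•` satisfies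
`Γ(j,k) = Γ(j-1,k-1)`. -/
theorem stmt4 {A : Type*} [Ring A] (σ : A → A)
    (hσmul : ∀ u v : A, σ (u * v) = σ v * σ u)
    (hσadd : ∀ u v : A, σ (u + v) = σ u + σ v)
    (hσinv : ∀ u : A, σ (σ u) = u)
    (hσone : σ 1 = 1)
    (T Tb : ℤ → ℤ → Aˣ)
    (hbul : ∀ j k : ℤ, σ ↑(T j k) = ↑(Tb j k))
    (hT : ∀ j k : ℤ, Odd (j + k) →
      (T j (k+1) : A) * ↑(Tb j (k-1)) = 1 + (T (j-1) k : A) * ↑(Tb (j+1) k))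
    (hq1 : ∀ j k : ℤ, Odd (j + k) →
      (↑(T j (k-1))⁻¹ : A) * ↑(T (j+1) k) = (Tb (j+1) k : A) * ↑(Tb j (k-1))⁻¹)
    (hq2 : ∀ j k : ℤ, Odd (j + k) →
      (T (j-1) k : A) * ↑(T j (k-1))⁻¹ = (↑(Tb j (k-1))⁻¹ : A) * ↑(Tb (j-1) k))
    (j k : ℤ) (hjk : Even (j + k)) :
    (T (j-1) (k+1) : A) * ↑(T j k)⁻¹ + (↑(Tb j k)⁻¹ : A) * ↑(Tb (j+1) (k-1))
      = (T (j-2) k : A) * ↑(T (j-1) (k-1))⁻¹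
        + (↑(Tb (j-1) (k-1))⁻¹ : A) * ↑(Tb j (k-2)) :=
  stmt4_general T Tb hT hq1 j k hjk
end

section
/- Under the hypotheses of the noncommutative A₁ T-system (relation T(j,k+1)·T(j,k-1)• = 1 + T(j-1,k)·T(j+1,k)• and the quasi-commutation relations), the quantity Δ(j,k) = T(j,k)⁻¹·T(j+1,k+1) + T(j-1,k-1)•·(T(j,k)•)⁻¹ satisfies Δ(j,k) = Δ(j+1,k-1), i.e. Δ is conserved in the (-1,1) direction. -/
/-!
Multiplying the T-system relation centred at `(j+1,k)` by `T(j,k)⁻¹` on the left and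
`(T(j+1,k-1)•)⁻¹` on the right splits `T(j,k)⁻¹·T(j+1,k+1)` into two terms; the `•`-image of the
relation centred at `(j,k-1)` splits `T(j+1,k-1)⁻¹·T(j,k-2)` in the same way. Quasi-commutation
turns one term of each into a term of `Δ(j+1,k-1)`, and identifies the two leftover terms, which
then cancel.
-/

section Units

variable {M : Type*} [Monoid M]

theorem Units.inv_mul_eq_mul_inv_of_inv_mul_eq {u v w x : Mˣ}
    (h : (↑u⁻¹ * ↑v : M) = ↑w * ↑x⁻¹) :
    (↑v⁻¹ * ↑u : M) = ↑x * ↑w⁻¹ := by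
  have h' : u⁻¹ * v = w * x⁻¹ := Units.ext (by simpa using h)
  simpa using congrArg (fun y : Mˣ => ((y⁻¹ : Mˣ) : M)) h'

theorem Units.inv_mul_inv_eq_of_mul_inv_eq {u v w x : Mˣ}
    (h : (↑u * ↑v⁻¹ : M) = ↑w⁻¹ * ↑x) :
    (↑u⁻¹ * ↑w⁻¹ : M) = ↑v⁻¹ * ↑x⁻¹ := by
  have h' : u * v⁻¹ = w⁻¹ * x := Units.ext (by simpa using h)
  have hwu : w * u = x * v := by
    rw [_root_.mul_inv_eq_iff_eq_mul, mul_assoc, _root_.eq_inv_mul_iff_mul_eq] at h'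
    exact h'
  simpa using congrArg (fun y : Mˣ => ((y⁻¹ : Mˣ) : M)) hwu

end Units

section Ring

variable {A : Type*} [Ring A]

theorem Units.inv_mul_eq_of_mul_eq_one_add {u v : Aˣ} {x y : A} (h : x * v = 1 + u * y) :
    ↑u⁻¹ * x = ↑u⁻¹ * ↑v⁻¹ + y * ↑v⁻¹ := by
  calc ↑u⁻¹ * x = ↑u⁻¹ * (x * v) * ↑v⁻¹ := by simp [mul_assoc]
    _ = ↑u⁻¹ * ↑v⁻¹ + y * ↑v⁻¹ := by
      rw [h, mul_add, mul_one, add_mul, ← mul_assoc, u.inv_mul, one_mul]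

theorem map_eq_one_add_of_antimultiplicative {σ : A → A}
    (hσmul : ∀ u v : A, σ (u * v) = σ v * σ u) (hσadd : ∀ u v : A, σ (u + v) = σ u + σ v)
    (hσone : σ 1 = 1) {x y z w : A} (h : x * y = 1 + z * w) :
    σ y * σ x = 1 + σ w * σ z := by
  simpa only [hσmul, hσadd, hσone] using congrArg σ h

/-- `Δ(j,k) = Δ(j+1,k-1)` in the letters `a = T(j,k)`, `b = T(j+1,k+1)`, `e = T(j+1,k-1)`,
`f = T(j+2,k)`, `p = T(j,k-2)`, `c = T(j-1,k-1)`, where `x'` stands for `x•`. -/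
theorem conservation_of_relations {a e a' e' : Aˣ} {b f p f' p' c' : A}
    (hb : b * e' = 1 + a * f') (hp : p * a' = 1 + e * c')
    (hf : ↑e⁻¹ * f = f' * ↑e'⁻¹) (hpq : ↑e⁻¹ * p = p' * ↑e'⁻¹)
    (hae : (↑a⁻¹ * ↑e'⁻¹ : A) = ↑e⁻¹ * ↑a'⁻¹) :
    ↑a⁻¹ * b + c' * ↑a'⁻¹ = ↑e⁻¹ * f + p' * ↑e'⁻¹ := by
  rw [Units.inv_mul_eq_of_mul_eq_one_add hb, ← hpq, Units.inv_mul_eq_of_mul_eq_one_add hp, hae,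
    ← hf]
  abel

end Ring

/-- For a solution `T` of the noncommutative A₁ T-system, the
quantity `Δ(j,k) = T(j,k)⁻¹·T(j+1,k+1) + T(j-1,k-1)•·(T(j,k)•)⁻¹` satisfies
`Δ(j,k) = Δ(j+1,k-1)`. -/
theorem stmt5 {A : Type*} [Ring A] (σ : A → A)
    (hσmul : ∀ u v : A, σ (u * v) = σ v * σ u)
    (hσadd : ∀ u v : A, σ (u + v) = σ u + σ v)
    (hσinv : ∀ u : A, σ (σ u) = u)
    (hσone : σ 1 = 1)
    (T Tb : ℤ → ℤ → Aˣ)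
    (hbul : ∀ j k : ℤ, σ ↑(T j k) = ↑(Tb j k))
    (hT : ∀ j k : ℤ, Odd (j + k) →
      (T j (k+1) : A) * ↑(Tb j (k-1)) = 1 + (T (j-1) k : A) * ↑(Tb (j+1) k))
    (hq1 : ∀ j k : ℤ, Odd (j + k) →
      (↑(T j (k-1))⁻¹ : A) * ↑(T (j+1) k) = (Tb (j+1) k : A) * ↑(Tb j (k-1))⁻¹)
    (hq2 : ∀ j k : ℤ, Odd (j + k) →
      (T (j-1) k : A) * ↑(T j (k-1))⁻¹ = (↑(Tb j (k-1))⁻¹ : A) * ↑(Tb (j-1) k))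
    (j k : ℤ) (hjk : Even (j + k)) :
    (↑(T j k)⁻¹ : A) * ↑(T (j+1) (k+1)) + (Tb (j-1) (k-1) : A) * ↑(Tb j k)⁻¹
      = (↑(T (j+1) (k-1))⁻¹ : A) * ↑(T (j+2) k)
        + (Tb j (k-2) : A) * ↑(Tb (j+1) (k-1))⁻¹ := by
  have hσTb (u v : ℤ) : σ ↑(Tb u v) = ↑(T u v) := by rw [← hbul, hσinv]
  have ho₁ : Odd (j + 1 + k) := by rw [add_right_comm]; exact hjk.add_one
  have ho₂ : Odd (j + (k - 1)) := by rw [← add_sub_assoc]; exact hjk.sub_odd odd_one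
  have hb := hT (j + 1) k ho₁
  have hp := map_eq_one_add_of_antimultiplicative hσmul hσadd hσone (hT j (k - 1) ho₂)
  have hf := hq1 (j + 1) k ho₁
  have hpq := Units.inv_mul_eq_mul_inv_of_inv_mul_eq (hq1 j (k - 1) ho₂)
  have hae := Units.inv_mul_inv_eq_of_mul_inv_eq (hq2 (j + 1) k ho₁)
  rw [hbul, hbul, hσTb, hσTb] at hp
  simp only [add_sub_cancel_right, sub_add_cancel, sub_sub, add_assoc, one_add_one_eq_two]
    at hb hp hf hpq hae
  exact conservation_of_relations hb hp hf hpq hae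
end

section
/- Let A be a unital ring and R : ℤ → A with all R(n) invertible, satisfying R(n+1)·R(n)⁻¹·R(n-1) = R(n) + R(n)⁻¹ for all n ∈ ℤ (the noncommutative A₁ Q-system). Then the quantity C(n) = R(n+1)⁻¹·R(n)·R(n+1)·R(n)⁻¹ is conserved: C(n) = C(n-1) for all n. -/
/-!
The recursion says that `R(n+1) R(n)⁻¹ R(n-1)` equals `R(n) + R(n)⁻¹`, which commutes with `R(n)`.
Conjugating the identity `R(n) · (R(n+1) R(n)⁻¹ R(n-1)) = (R(n+1) R(n)⁻¹ R(n-1)) · R(n)` by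
`R(n+1)⁻¹` on the left and `R(n-1)⁻¹` on the right is exactly `C(n) = C(n-1)`.
-/

theorem inv_mul_mul_mul_inv_eq_of_commute {G : Type*} [Group G] {a b c : G}
    (h : Commute b (a * b⁻¹ * c)) :
    a⁻¹ * b * a * b⁻¹ = b⁻¹ * c * b * c⁻¹ :=
  calc a⁻¹ * b * a * b⁻¹ = a⁻¹ * (b * (a * b⁻¹ * c)) * c⁻¹ := by group
    _ = a⁻¹ * ((a * b⁻¹ * c) * b) * c⁻¹ := by rw [h.eq]
    _ = b⁻¹ * c * b * c⁻¹ := by group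

theorem Units.commute_add_inv {A : Type*} [Semiring A] (u : Aˣ) : Commute (u : A) (u + ↑u⁻¹) :=
  (Commute.refl _).add_right u.commute_coe_inv

/-- For the noncommutative A₁ Q-system
`R(n+1)·R(n)⁻¹·R(n-1) = R(n) + R(n)⁻¹`, the quantity
`C(n) = R(n+1)⁻¹·R(n)·R(n+1)·R(n)⁻¹` is conserved: `C(n) = C(n-1)`. -/
theorem stmt9 {A : Type*} [Ring A] (R : ℤ → Aˣ)
    (hR : ∀ n : ℤ, (R (n+1) : A) * ↑(R n)⁻¹ * ↑(R (n-1)) = ↑(R n) + ↑(R n)⁻¹)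
    (n : ℤ) :
    (↑(R (n+1))⁻¹ : A) * ↑(R n) * ↑(R (n+1)) * ↑(R n)⁻¹
      = (↑(R n)⁻¹ : A) * ↑(R (n-1)) * ↑(R n) * ↑(R (n-1))⁻¹ := by
  have hcomm : Commute (R n) (R (n+1) * (R n)⁻¹ * R (n-1)) := by
    rw [← Commute.units_val_iff, Units.val_mul, Units.val_mul, hR n]
    exact (R n).commute_add_inv
  simpa only [Units.val_mul] using
    congrArg Units.val (inv_mul_mul_mul_inv_eq_of_commute hcomm)
end

section
/- Let A be a unital ring and R : ℤ → A with all R(n) invertible satisfying R(n+1)·R(n)⁻¹·R(n-1) = R(n) + R(n)⁻¹ for all n. Then K(n) = R(n+1)·R(n)⁻¹ + R(n)⁻¹·R(n-1) is conserved: K(n) = K(n-1) for all n, and K(1) = R(1)·R(0)⁻¹ + R(1)⁻¹·R(0)⁻¹ + R(1)⁻¹·R(0). -/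
/-!
Solving the relation `c b⁻¹ a = b + b⁻¹` once for `c b⁻¹` and once for `b⁻¹ a` rewrites
`K = c b⁻¹ + b⁻¹ a` in two ways, as `b a⁻¹ + b⁻¹ a⁻¹ + b⁻¹ a` and as `c b⁻¹ + c⁻¹ b⁻¹ + c⁻¹ b`.
The first form for the triple `R(n+1), R(n), R(n-1)` and the second for `R(n), R(n-1), R(n-2)`
are the same element, so `K(n) = K(n-1)`; the first form at `n = 1` is the value of `K(1)`.
-/

namespace Units

variable {A : Type*} [Ring A] {a b c : Aˣ}

theorem mul_inv_add_inv_mul_eq_of_qSystem (h : (c : A) * ↑b⁻¹ * ↑a = ↑b + ↑b⁻¹) :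
    (c : A) * ↑b⁻¹ + ↑b⁻¹ * ↑a = ↑b * ↑a⁻¹ + ↑b⁻¹ * ↑a⁻¹ + ↑b⁻¹ * ↑a := by
  rw [(eq_mul_inv_iff_mul_eq a).mpr h, add_mul]

theorem mul_inv_add_inv_mul_eq_of_qSystem' (h : (c : A) * ↑b⁻¹ * ↑a = ↑b + ↑b⁻¹) :
    (c : A) * ↑b⁻¹ + ↑b⁻¹ * ↑a = ↑c * ↑b⁻¹ + ↑c⁻¹ * ↑b⁻¹ + ↑c⁻¹ * ↑b := by
  have h' : (↑b⁻¹ : A) * ↑a = ↑c⁻¹ * (↑b + ↑b⁻¹) :=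
    (eq_inv_mul_iff_mul_eq c).mpr (by rw [← mul_assoc, h])
  rw [h', mul_add]
  abel

end Units

/-- For the noncommutative A₁ Q-system
`R(n+1)·R(n)⁻¹·R(n-1) = R(n) + R(n)⁻¹`, the quantity
`K(n) = R(n+1)·R(n)⁻¹ + R(n)⁻¹·R(n-1)` is conserved, and
`K(1) = R(1)·R(0)⁻¹ + R(1)⁻¹·R(0)⁻¹ + R(1)⁻¹·R(0)`. -/
theorem stmt10 {A : Type*} [Ring A] (R : ℤ → Aˣ)
    (hR : ∀ n : ℤ, (R (n+1) : A) * ↑(R n)⁻¹ * ↑(R (n-1)) = ↑(R n) + ↑(R n)⁻¹) :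
    (∀ n : ℤ, (R (n+1) : A) * ↑(R n)⁻¹ + (↑(R n)⁻¹ : A) * ↑(R (n-1))
        = (R n : A) * ↑(R (n-1))⁻¹ + (↑(R (n-1))⁻¹ : A) * ↑(R (n-2)))
      ∧ (R 2 : A) * ↑(R 1)⁻¹ + (↑(R 1)⁻¹ : A) * ↑(R 0)
        = (R 1 : A) * ↑(R 0)⁻¹ + (↑(R 1)⁻¹ : A) * ↑(R 0)⁻¹ + (↑(R 1)⁻¹ : A) * ↑(R 0) := by
  refine ⟨fun n => ?_, ?_⟩
  · have hR' := hR (n - 1)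
    rw [sub_add_cancel, sub_sub, one_add_one_eq_two] at hR'
    rw [Units.mul_inv_add_inv_mul_eq_of_qSystem (hR n),
      Units.mul_inv_add_inv_mul_eq_of_qSystem' hR']
  · simpa using Units.mul_inv_add_inv_mul_eq_of_qSystem (hR 1)
end

section
/- Let A be a unital ring, C ∈ A invertible, and R : ℤ → A with all R(n) invertible. Suppose R(n)·R(n+1) = R(n+1)·C·R(n) for all n. Then the recursion R(n+1)·R(n)⁻¹·R(n-1) = R(n) + R(n)⁻¹ is equivalent to R(n+1)·C·R(n-1) = 1 + R(n)². -/
/-! The quasi-commutation says that `R (n+1) * C` is the conjugate of `R (n+1)` by `R n`, so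
`R (n+1) * C * R (n-1) = R n * (R (n+1) * (R n)⁻¹ * R (n-1))`, while
`1 + R n ^ 2 = R n * (R n + (R n)⁻¹)`. The two recursions thus differ by left multiplication with
the unit `R n`. -/

theorem Units.mul_mul_eq_mul_mul_inv_mul_of_mul_eq {M : Type*} [Monoid M] (u : Mˣ) {v c : M}
    (h : (u : M) * v = v * c * u) (w : M) : v * c * w = u * (v * ↑u⁻¹ * w) := by
  rw [← mul_assoc, ← mul_assoc, h, Units.mul_inv_cancel_right]

theorem Units.mul_eq_one_add_mul_self_iff {A : Type*} [Ring A] (u : Aˣ) (x : A) :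
    (u : A) * x = 1 + u * u ↔ x = u + ↑u⁻¹ := by
  rw [show 1 + (u : A) * u = u * (u + ↑u⁻¹) by rw [mul_add, Units.mul_inv, add_comm],
    Units.mul_right_inj]

/-- Given the quasi-commutation `R(n)·R(n+1) = R(n+1)·C·R(n)`
for all `n`, the recursion `R(n+1)·R(n)⁻¹·R(n-1) = R(n) + R(n)⁻¹` is
equivalent to `R(n+1)·C·R(n-1) = 1 + R(n)²`. -/
theorem stmt11 {A : Type*} [Ring A] (C : Aˣ) (R : ℤ → Aˣ)
    (hq : ∀ n : ℤ, (R n : A) * ↑(R (n+1)) = (R (n+1) : A) * ↑C * ↑(R n)) :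
    (∀ n : ℤ, (R (n+1) : A) * ↑(R n)⁻¹ * ↑(R (n-1)) = ↑(R n) + ↑(R n)⁻¹)
      ↔ (∀ n : ℤ, (R (n+1) : A) * ↑C * ↑(R (n-1)) = 1 + (R n : A) * ↑(R n)) :=
  forall_congr' fun n => by
    rw [Units.mul_mul_eq_mul_mul_inv_mul_of_mul_eq (R n) (hq n), Units.mul_eq_one_add_mul_self_iff]
end

section
/- Let A be a unital ring, C ∈ A invertible, R : ℤ → A invertible elements satisfying R(n)·R(n+1) = R(n+1)·C·R(n) and R(n+1)·C·R(n-1) = 1 + R(n)² for all n. Define integer sequences a(j,k) = -⌊(j-k+2)/4⌋, b(j,k) = ⌊(j+k+2)/4⌋, c(j,k) = ⌊(j+k)/4⌋, d(j,k) = -⌊(j-k)/4⌋, and set T(j,k) = C^{-a(j,k)}·R(k)·C^{b(j,k)} and T•(j,k) = C^{-c(j,k)}·R(k)·C^{d(j,k)} for j+k even. Then T(j,k+1)·T•(j,k-1) = 1 + T(j-1,k)·T•(j+1,k) for all j+k odd. -/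
/-
Both sides of the T-system relation are conjugates, by the same power of `C`, of the two sides of
the Q-system relation `R(k+1)·C·R(k-1) = 1 + R(k)²`: the floor exponents satisfy
`a(j,k+1) = d(j,k-1) = a(j-1,k) = d(j+1,k)`, `b(j,k+1) = c(j,k-1) + 1` and `b(j-1,k) = c(j+1,k)`,
so the inner powers of `C` collapse to the single `C` of the Q-system (resp. cancel), and
conjugation fixes `1`.
-/

/-- Exponent `a(j,k) = -⌊(j-k+2)/4⌋`. -/
def aExp (j k : ℤ) : ℤ := -((j - k + 2).fdiv 4)
/-- Exponent `b(j,k) = ⌊(j+k+2)/4⌋`. -/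
def bExp (j k : ℤ) : ℤ := (j + k + 2).fdiv 4
/-- Exponent `c(j,k) = ⌊(j+k)/4⌋`. -/
def cExp (j k : ℤ) : ℤ := (j + k).fdiv 4
/-- Exponent `d(j,k) = -⌊(j-k)/4⌋`. -/
def dExp (j k : ℤ) : ℤ := -((j - k).fdiv 4)

/-- `T(j,k) = C^{-a(j,k)}·R(k)·C^{b(j,k)}` as a unit. -/
def Tsol {A : Type*} [Ring A] (C : Aˣ) (R : ℤ → Aˣ) (j k : ℤ) : Aˣ :=
  C ^ (-(aExp j k)) * R k * C ^ (bExp j k)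

/-- `T•(j,k) = C^{-c(j,k)}·R(k)·C^{d(j,k)}` as a unit. -/
def TsolB {A : Type*} [Ring A] (C : Aˣ) (R : ℤ → Aˣ) (j k : ℤ) : Aˣ :=
  C ^ (-(cExp j k)) * R k * C ^ (dExp j k)

section Exponents

variable (j k : ℤ)

theorem aExp_sub_one_left : aExp (j - 1) k = aExp j (k + 1) := by
  simp only [aExp]; ring_nf

theorem dExp_sub_one_right : dExp j (k - 1) = aExp j (k + 1) := by
  simp only [aExp, dExp]; ring_nf

theorem dExp_add_one_left : dExp (j + 1) k = aExp j (k + 1) := by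
  simp only [aExp, dExp]; ring_nf

theorem bExp_add_one_right : bExp j (k + 1) = cExp j (k - 1) + 1 := by
  simp only [bExp, cExp]
  rw [show j + (k + 1) + 2 = j + (k - 1) + 4 by ring,
    Int.fdiv_eq_ediv_of_nonneg _ (by norm_num), Int.fdiv_eq_ediv_of_nonneg _ (by norm_num)]
  omega

theorem bExp_sub_one_left : bExp (j - 1) k = cExp (j + 1) k := by
  simp only [bExp, cExp]; ring_nf

end Exponents

section Conjugation

variable {A : Type*} [Ring A] (C : Aˣ) (R : ℤ → Aˣ) (j k : ℤ)

theorem Units.val_mul_one_add_mul_inv (u : Aˣ) (x : A) :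
    (u : A) * (1 + x) * ↑u⁻¹ = 1 + u * x * ↑u⁻¹ := by
  rw [mul_add, add_mul, mul_one, Units.mul_inv]

theorem Tsol_mul_TsolB_vertical :
    Tsol C R j (k + 1) * TsolB C R j (k - 1)
      = C ^ (-aExp j (k + 1)) * (R (k + 1) * C * R (k - 1)) * (C ^ (-aExp j (k + 1)))⁻¹ := by
  rw [Tsol, TsolB, bExp_add_one_right, dExp_sub_one_right]
  group

theorem Tsol_mul_TsolB_horizontal :
    Tsol C R (j - 1) k * TsolB C R (j + 1) k
      = C ^ (-aExp j (k + 1)) * (R k * R k) * (C ^ (-aExp j (k + 1)))⁻¹ := by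
  rw [Tsol, TsolB, aExp_sub_one_left, bExp_sub_one_left, dExp_add_one_left]
  group

end Conjugation

theorem stmt12_general {A : Type*} [Ring A] (C : Aˣ) (R : ℤ → Aˣ)
    (hQ : ∀ n : ℤ, (R (n+1) : A) * ↑C * ↑(R (n-1)) = 1 + (R n : A) * ↑(R n))
    (j k : ℤ) :
    (Tsol C R j (k+1) : A) * ↑(TsolB C R j (k-1))
      = 1 + (Tsol C R (j-1) k : A) * ↑(TsolB C R (j+1) k) := by
  rw [← Units.val_mul, ← Units.val_mul, Tsol_mul_TsolB_vertical, Tsol_mul_TsolB_horizontal]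
  push_cast
  rw [hQ k, Units.val_mul_one_add_mul_inv]

/-- With `T`, `T•` defined via the explicit floor exponents from
a solution of the quasi-commuting noncommutative A₁ Q-system, the NC A₁
T-system relation `T(j,k+1)·T•(j,k-1) = 1 + T(j-1,k)·T•(j+1,k)` holds for all
`j+k` odd. -/
theorem stmt12 {A : Type*} [Ring A] (C : Aˣ) (R : ℤ → Aˣ)
    (hq : ∀ n : ℤ, (R n : A) * ↑(R (n+1)) = (R (n+1) : A) * ↑C * ↑(R n))
    (hQ : ∀ n : ℤ, (R (n+1) : A) * ↑C * ↑(R (n-1)) = 1 + (R n : A) * ↑(R n))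
    (j k : ℤ) (hjk : Odd (j + k)) :
    (Tsol C R j (k+1) : A) * ↑(TsolB C R j (k-1))
      = 1 + (Tsol C R (j-1) k : A) * ↑(TsolB C R (j+1) k) :=
  stmt12_general C R hQ j k
end

section
/- With T(j,k) = C^{-a(j,k)}·R(k)·C^{b(j,k)} and T•(j,k) = C^{-c(j,k)}·R(k)·C^{d(j,k)} as above (with a,b,c,d given by the explicit floor formulas), the quasi-commutation relations of the NC T-system hold: T(j,k-1)⁻¹·T(j+1,k) = T•(j+1,k)·(T•(j,k-1))⁻¹ and T(j-1,k)·T(j,k-1)⁻¹ = (T•(j,k-1))⁻¹·T•(j-1,k) for all j+k odd. -/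
section Exponents

private lemma fdiv_four (n : ℤ) : n.fdiv 4 = n / 4 :=
  Int.fdiv_eq_ediv_of_nonneg n (by norm_num)

lemma exps_add_one_left (j k : ℤ) :
    aExp (j + 1) k = aExp j (k - 1) ∧ bExp (j + 1) k = cExp j (k - 1) + 1 ∧
      cExp (j + 1) k = bExp j (k - 1) ∧ dExp (j + 1) k = dExp j (k - 1) := by
  simp only [aExp, bExp, cExp, dExp, fdiv_four]
  omega

lemma exps_sub_one_left (j k : ℤ) :
    aExp (j - 1) k = dExp j (k - 1) ∧ bExp (j - 1) k = bExp j (k - 1) ∧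
      cExp (j - 1) k = cExp j (k - 1) ∧ dExp (j - 1) k = aExp j (k - 1) + 1 := by
  simp only [aExp, bExp, cExp, dExp, fdiv_four]
  omega

end Exponents

section QuasiCommuting

variable {G : Type*} [Group G] {x u v : G}

lemma inv_mul_mul_eq_mul_inv_of_mul_eq (h : u * v = v * x * u) : u⁻¹ * v * x = v * u⁻¹ :=
  calc u⁻¹ * v * x = u⁻¹ * (v * x * u) * u⁻¹ := by group
    _ = v * u⁻¹ := by rw [← h]; group

lemma sandwich_inv_mul_sandwich (h : u * v = v * x * u) (a b c d : ℤ) :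
    (x ^ (-a) * u * x ^ b)⁻¹ * (x ^ (-a) * v * x ^ (c + 1))
      = (x ^ (-b) * v * x ^ d) * (x ^ (-c) * u * x ^ d)⁻¹ :=
  calc _ = x ^ (-b) * (u⁻¹ * v * x) * x ^ c := by group
    _ = x ^ (-b) * (v * u⁻¹) * x ^ c := by rw [inv_mul_mul_eq_mul_inv_of_mul_eq h]
    _ = _ := by group

lemma sandwich_mul_inv_sandwich (h : u * v = v * x * u) (a b c d : ℤ) :
    (x ^ (-d) * v * x ^ b) * (x ^ (-a) * u * x ^ b)⁻¹
      = (x ^ (-c) * u * x ^ d)⁻¹ * (x ^ (-c) * v * x ^ (a + 1)) :=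
  calc _ = x ^ (-d) * (v * u⁻¹) * x ^ a := by group
    _ = x ^ (-d) * (u⁻¹ * v * x) * x ^ a := by rw [inv_mul_mul_eq_mul_inv_of_mul_eq h]
    _ = _ := by group

end QuasiCommuting

theorem stmt13_general {A : Type*} [Ring A] (C : Aˣ) (R : ℤ → Aˣ)
    (hq : ∀ n : ℤ, (R n : A) * ↑(R (n+1)) = (R (n+1) : A) * ↑C * ↑(R n))
    (j k : ℤ) :
    (↑(Tsol C R j (k-1))⁻¹ : A) * ↑(Tsol C R (j+1) k)
        = (TsolB C R (j+1) k : A) * ↑(TsolB C R j (k-1))⁻¹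
      ∧ (Tsol C R (j-1) k : A) * ↑(Tsol C R j (k-1))⁻¹
        = (↑(TsolB C R j (k-1))⁻¹ : A) * ↑(TsolB C R (j-1) k) := by
  have hR : R (k - 1) * R k = R k * C * R (k - 1) :=
    Units.ext (by simpa only [Units.val_mul, sub_add_cancel] using hq (k - 1))
  obtain ⟨ha₁, hb₁, hc₁, hd₁⟩ := exps_add_one_left j k
  obtain ⟨ha₂, hb₂, hc₂, hd₂⟩ := exps_sub_one_left j k
  simp only [← Units.val_mul, Units.val_inj]
  constructor
  · simp only [Tsol, TsolB, ha₁, hb₁, hc₁, hd₁]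
    exact sandwich_inv_mul_sandwich hR _ _ _ _
  · simp only [Tsol, TsolB, ha₂, hb₂, hc₂, hd₂]
    exact sandwich_mul_inv_sandwich hR _ _ _ _

/-- With `T`, `T•` defined via the explicit floor exponents from
a quasi-commuting family `R`, the quasi-commutation relations of the NC A₁
T-system hold for all `j+k` odd. -/
theorem stmt13 {A : Type*} [Ring A] (C : Aˣ) (R : ℤ → Aˣ)
    (hq : ∀ n : ℤ, (R n : A) * ↑(R (n+1)) = (R (n+1) : A) * ↑C * ↑(R n))
    (j k : ℤ) (hjk : Odd (j + k)) :
    (↑(Tsol C R j (k-1))⁻¹ : A) * ↑(Tsol C R (j+1) k)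
        = (TsolB C R (j+1) k : A) * ↑(TsolB C R j (k-1))⁻¹
      ∧ (Tsol C R (j-1) k : A) * ↑(Tsol C R j (k-1))⁻¹
        = (↑(TsolB C R j (k-1))⁻¹ : A) * ↑(TsolB C R (j-1) k) :=
  stmt13_general C R hq j k
end

section
/- Let A be a unital ring with involutive anti-automorphism • and a, b, c ∈ A invertible with a⁻¹·b = b•·(a•)⁻¹ and b⁻¹·c = c•·(b•)⁻¹. Suppose b' ∈ A satisfies b'·b• = a• + c•. Then b' satisfies the triangle relation b'·a⁻¹·c = c•·(a•)⁻¹·(b')•, provided (b')• satisfies b·(b')• = a + c. -/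
/-! Put `x = b⁻¹·a` and `t = c•·(a•)⁻¹`. The first relation inverts to `(b•)⁻¹ = (a•)⁻¹·b⁻¹·a`,
so the second reads `b⁻¹·c = t·x`, and the two mutation relations become `b' = (1 + t)·x` and
`(b')• = x + t·x`. Both sides of the triangle relation are then `(1 + t)·t·x`. -/

theorem inv_eq_of_inv_mul_eq_mul_inv {G : Type*} [Group G] {a b a' b' : G}
    (h : a⁻¹ * b = b' * a'⁻¹) : b'⁻¹ = a'⁻¹ * b⁻¹ * a := by
  rw [mul_inv_eq_iff_eq_mul.1 h.symm]
  group

theorem stmt17_general {A : Type*} [Ring A]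
    (a b c ab bb cb : Aˣ)
    (h1 : (↑a⁻¹ : A) * ↑b = ↑bb * ↑ab⁻¹)
    (h2 : (↑b⁻¹ : A) * ↑c = ↑cb * ↑bb⁻¹)
    (b' b'b : A)
    (hmut : b' * ↑bb = ↑ab + ↑cb)
    (hmut' : (b : A) * b'b = ↑a + ↑c) :
    b' * ↑a⁻¹ * ↑c = (cb : A) * ↑ab⁻¹ * b'b := by
  have hbb : (↑bb⁻¹ : A) = ↑ab⁻¹ * ↑b⁻¹ * ↑a := by
    simpa using congrArg Units.val (inv_eq_of_inv_mul_eq_mul_inv (Units.ext (by simpa using h1)))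
  set t : A := cb * ab⁻¹
  have hc : (↑b⁻¹ : A) * c = t * (b⁻¹ * a) := by
    rw [h2, hbb]
    simp only [t, mul_assoc]
  have hb' : b' = (1 + t) * (b⁻¹ * a) := by
    rw [(Units.eq_mul_inv_iff_mul_eq bb).2 hmut, hbb]
    simp only [t, add_mul, mul_assoc, Units.mul_inv_cancel_left, one_mul]
  have hb'b : b'b = b⁻¹ * a + b⁻¹ * c := by
    rw [← mul_add]
    exact (Units.eq_inv_mul_iff_mul_eq b).2 hmut'
  calc b' * a⁻¹ * c = (1 + t) * (b⁻¹ * c) := by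
        rw [hb']
        simp only [mul_assoc, Units.mul_inv_cancel_left]
    _ = t * b'b := by
        rw [hb'b, hc]
        noncomm_ring

/-- If `a⁻¹·b = b•·(a•)⁻¹`, `b⁻¹·c = c•·(b•)⁻¹`, and the mutated
variable `b'` satisfies `b'·b• = a• + c•` and `b·(b')• = a + c`, then the
triangle relation `b'·a⁻¹·c = c•·(a•)⁻¹·(b')•` holds. -/
theorem stmt17 {A : Type*} [Ring A] (σ : A → A)
    (hσmul : ∀ u v : A, σ (u * v) = σ v * σ u)
    (hσadd : ∀ u v : A, σ (u + v) = σ u + σ v)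
    (hσinv : ∀ u : A, σ (σ u) = u)
    (hσone : σ 1 = 1)
    (a b c ab bb cb : Aˣ)
    (hab : σ ↑a = ↑ab) (hbb : σ ↑b = ↑bb) (hcb : σ ↑c = ↑cb)
    (h1 : (↑a⁻¹ : A) * ↑b = ↑bb * ↑ab⁻¹)
    (h2 : (↑b⁻¹ : A) * ↑c = ↑cb * ↑bb⁻¹)
    (b' b'b : A) (hb'b : σ b' = b'b)
    (hmut : b' * ↑bb = ↑ab + ↑cb)
    (hmut' : (b : A) * b'b = ↑a + ↑c) :
    b' * ↑a⁻¹ * ↑c = (cb : A) * ↑ab⁻¹ * b'b :=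
  stmt17_general a b c ab bb cb h1 h2 b' b'b hmut hmut'
end

section
/- Let A be a unital ring with involutive anti-automorphism •. Suppose a, b, c, x and their bullets are invertible, with a·b⁻¹ = (b•)⁻¹·a• and b⁻¹·c = c•·(b•)⁻¹ and x·b• = 1 + a·c•. Then b•·x = 1 + a•·c, and consequently x•·b = 1 + c•·a and b = (x•)⁻¹ + c·x⁻¹·a. -/
/-! Write `u•` for `σ u`. Clearing the inverses, the first two hypotheses say `b•·a = a•·b` and
`c·b• = b·c•`. Multiplying by `b•` on the right and using these, `b•·x·b• = b• + b•·a·c• =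
b• + a•·c·b•`, which gives `b•·x = 1 + a•·c`; applying `•` gives `x•·b = 1 + c•·a`. In the same
way both `c•·x` and `x•·c` become `c• + c•·a·c•` after multiplication by `b•`, so
`(x•)⁻¹·c• = c·x⁻¹`, and the last identity follows from `b = (x•)⁻¹·(x•·b)`. -/

namespace Units

theorem inv_mul_eq_mul_inv_iff {M : Type*} [Monoid M] {u v : Mˣ} {p q : M} :
    ↑v⁻¹ * p = q * ↑u⁻¹ ↔ p * ↑u = ↑v * q := by
  rw [inv_mul_eq_iff_eq_mul, ← mul_assoc, eq_mul_inv_iff_mul_eq]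

variable {R : Type*} [Ring R]

theorem mul_eq_one_add_mul_of_mul_eq_one_add_mul {a a' b c c' x : R} {u : Rˣ}
    (ha : ↑u * a = a' * b) (hc : c * ↑u = b * c') (hx : x * ↑u = 1 + a * c') :
    ↑u * x = 1 + a' * c := by
  rw [← mul_left_inj u]
  calc ↑u * x * ↑u = ↑u * (x * ↑u) := mul_assoc _ _ _
    _ = ↑u + ↑u * a * c' := by rw [hx]; noncomm_ring
    _ = ↑u + a' * (b * c') := by rw [ha, mul_assoc]
    _ = (1 + a' * c) * ↑u := by rw [← hc]; noncomm_ring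

theorem mul_eq_mul_of_mul_eq_one_add_mul {a b c c' x x' : R} {u : Rˣ}
    (hc : c * ↑u = b * c') (hx : x * ↑u = 1 + a * c') (hx' : x' * b = 1 + c' * a) :
    c' * x = x' * c := by
  rw [← mul_left_inj u]
  calc c' * x * ↑u = c' + c' * a * c' := by rw [mul_assoc, hx]; noncomm_ring
    _ = x' * c * ↑u := by rw [mul_assoc x', hc, ← mul_assoc, hx']; noncomm_ring

theorem eq_inv_add_mul_inv_mul {a b c c' : R} {x x' : Rˣ} (hx' : ↑x' * b = 1 + c' * a)
    (hk : c' * ↑x = ↑x' * c) : b = ↑x'⁻¹ + c * ↑x⁻¹ * a := by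
  have hc' : ↑x'⁻¹ * c' = c * ↑x⁻¹ := by rw [inv_mul_eq_mul_inv_iff, hk]
  rw [(eq_inv_mul_iff_mul_eq x').2 hx', mul_add, mul_one, ← mul_assoc, hc']

end Units

/-- If `a·b⁻¹ = (b•)⁻¹·a•`, `b⁻¹·c = c•·(b•)⁻¹` and
`x·b• = 1 + a·c•`, then `b•·x = 1 + a•·c`, `x•·b = 1 + c•·a`, and
`b = (x•)⁻¹ + c·x⁻¹·a`. -/
theorem stmt19 {A : Type*} [Ring A] (σ : A → A)
    (hσmul : ∀ u v : A, σ (u * v) = σ v * σ u)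
    (hσadd : ∀ u v : A, σ (u + v) = σ u + σ v)
    (hσinv : ∀ u : A, σ (σ u) = u)
    (hσone : σ 1 = 1)
    (a b c x ab bb cb xb : Aˣ)
    (hab : σ ↑a = ↑ab) (hbb : σ ↑b = ↑bb) (hcb : σ ↑c = ↑cb) (hxb : σ ↑x = ↑xb)
    (h1 : (a : A) * ↑b⁻¹ = ↑bb⁻¹ * ↑ab)
    (h2 : (↑b⁻¹ : A) * ↑c = ↑cb * ↑bb⁻¹)
    (h3 : (x : A) * ↑bb = 1 + ↑a * ↑cb) :
    (bb : A) * ↑x = 1 + ↑ab * ↑c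
      ∧ (xb : A) * ↑b = 1 + ↑cb * ↑a
      ∧ (b : A) = ↑xb⁻¹ + ↑c * ↑x⁻¹ * ↑a := by
  have hba_eq : (bb : A) * ↑a = ↑ab * ↑b := (Units.inv_mul_eq_mul_inv_iff.mp h1.symm).symm
  have hcb_eq : (c : A) * ↑bb = ↑b * ↑cb := Units.inv_mul_eq_mul_inv_iff.mp h2
  have hbx : (bb : A) * ↑x = 1 + ↑ab * ↑c :=
    Units.mul_eq_one_add_mul_of_mul_eq_one_add_mul hba_eq hcb_eq h3
  have hxb_eq : (xb : A) * ↑b = 1 + ↑cb * ↑a := by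
    have h := congrArg σ hbx
    rwa [hσmul, hσadd, hσone, hσmul, hxb, hcb, ← hbb, ← hab, hσinv, hσinv] at h
  have hcx : (cb : A) * ↑x = ↑xb * ↑c := Units.mul_eq_mul_of_mul_eq_one_add_mul hcb_eq h3 hxb_eq
  exact ⟨hbx, hxb_eq, Units.eq_inv_add_mul_inv_mul hxb_eq hcx⟩
end
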